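/- Let g : (ℝ₊)^m → ℝ be continuous and let c ∈ ℝ be a constant. Define f(τ) := max(g(τ), sup_{ω∈ℝ} F(e^{-iωτ₁},…,e^{-iωτₘ})) for a continuous F : ℂ^m → ℝ. Then the strong value sf(τ) := lim_{ε→0⁺} sup{f(τ') : τ' ∈ B(τ,ε) ∩ (ℝ₊)^m} satisfies sf(τ) = max(g's strong value, torus maximum of F) = max(sg(τ), max_{torus} F), and if additionally sg(τ) = g(τ) (e.g. g continuous), then sf(τ) = max(g(τ), max over the m-torus of F). -/

import Mathlib

open Metric Set Filter

/-- The m-torus, viewed as a subset of ℂ^m. -/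
def torus (m : ℕ) : Set (Fin m → ℂ) := {z | ∀ i, ‖z i‖ = 1}

/-- The set of strictly positive delay vectors. -/
def posDelays (m : ℕ) : Set (Fin m → ℝ) := {τ | ∀ i, 0 < τ i}

/-- The strong value of `f` at `τ`:
`sf(τ) = lim_{ε→0⁺} sup { f(τ') : τ' ∈ B(τ,ε) ∩ (ℝ₊)^m }`. -/
noncomputable def strongVal {m : ℕ} (f : (Fin m → ℝ) → ℝ) (τ : Fin m → ℝ) : ℝ :=
  limUnder (nhdsWithin (0:ℝ) (Ioi 0))
    (fun ε : ℝ => sSup (f '' (ball τ ε ∩ posDelays m)))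

/-!
By continuity, `g` stays within `δ` of `g τ` on small balls around `τ`. The second term of `f`
is bounded by the torus maximum of `F`, and it attains every value of `F` on every ball: with
`ω = 2π/ε`, each coordinate `e^{-iωtᵢ}` runs once around the circle as `tᵢ` ranges over
`[τᵢ, τᵢ + ε)`, so each point of the torus lies on the orbit of some delay vector within `ε`
of `τ` (this exact hit replaces the appeal to Kronecker's theorem). Hence the supremum of `f`
over a small ball is the maximum of that of `g` and of the torus maximum of `F`, and letting
the radius go to `0` gives the formula.
-/

open Topology Real

noncomputable def ballSup {X : Type*} [PseudoMetricSpace X] (φ : X → ℝ) (s : Set X) (x : X)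
    (ε : ℝ) : ℝ :=
  sSup (φ '' (ball x ε ∩ s))

lemma csSup_image_max {α β : Type*} [ConditionallyCompleteLinearOrder β] {g h : α → β}
    {s : Set α} (hg : BddAbove (g '' s)) (hh : BddAbove (h '' s)) :
    sSup ((fun x => max (g x) (h x)) '' s) = max (sSup (g '' s)) (sSup (h '' s)) := by
  rw [image_eq_range] at hg hh ⊢
  rw [image_eq_range, image_eq_range]
  exact ciSup_sup_eq hg hh

section ContinuousWithinAt

variable {X : Type*} [PseudoMetricSpace X] {φ : X → ℝ} {s : Set X} {x : X}

lemma ContinuousWithinAt.eventually_image_ball_subset (h : ContinuousWithinAt φ s x)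
    {δ : ℝ} (hδ : 0 < δ) :
    ∀ᶠ ε in 𝓝[>] (0 : ℝ), φ '' (ball x ε ∩ s) ⊆ closedBall (φ x) δ := by
  obtain ⟨ε₀, hε₀, hφ⟩ := Metric.continuousWithinAt_iff.1 h δ hδ
  filter_upwards [Ioo_mem_nhdsGT hε₀] with ε hε
  rintro _ ⟨y, ⟨hy, hys⟩, rfl⟩
  exact (hφ hys ((mem_ball.1 hy).trans hε.2)).le

lemma ContinuousWithinAt.eventually_bddAbove_image_ball (h : ContinuousWithinAt φ s x) :
    ∀ᶠ ε in 𝓝[>] (0 : ℝ), BddAbove (φ '' (ball x ε ∩ s)) := by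
  filter_upwards [h.eventually_image_ball_subset one_pos] with ε hsub
  exact (isBounded_closedBall.subset hsub).bddAbove

lemma ContinuousWithinAt.tendsto_ballSup (h : ContinuousWithinAt φ s x) (hx : x ∈ s) :
    Tendsto (ballSup φ s x) (𝓝[>] 0) (𝓝 (φ x)) := by
  rw [Metric.tendsto_nhds]
  intro δ hδ
  filter_upwards [h.eventually_image_ball_subset (half_pos hδ), self_mem_nhdsWithin]
    with ε hsub hε
  have hφx : φ x ∈ φ '' (ball x ε ∩ s) := mem_image_of_mem φ ⟨mem_ball_self hε, hx⟩
  have hlower : φ x ≤ ballSup φ s x ε :=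
    le_csSup (isBounded_closedBall.subset hsub).bddAbove hφx
  have hupper : ballSup φ s x ε ≤ φ x + δ / 2 :=
    csSup_le ⟨_, hφx⟩ fun y hy => by
      linarith [(abs_le.1 (mem_closedBall.1 (hsub hy))).2]
  rw [Real.dist_eq, abs_lt]
  constructor <;> linarith

end ContinuousWithinAt

lemma exists_mem_Ico_exp_eq {w : ℂ} (hw : ‖w‖ = 1) (a : ℝ) {p : ℝ} (hp : 0 < p) :
    ∃ t ∈ Ico a (a + p), Complex.exp (-(Complex.I * ↑(2 * π / p) * t)) = w := by
  set t₀ := -(p * Complex.arg w / (2 * π))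
  refine ⟨toIcoMod hp a t₀, toIcoMod_mem_Ico hp a t₀, ?_⟩
  obtain ⟨k, hk⟩ : ∃ k : ℤ, toIcoMod hp a t₀ = t₀ - k * p :=
    ⟨_, by linarith [self_sub_toIcoMod_eq_mul hp a t₀]⟩
  have hp' : (p : ℂ) ≠ 0 := Complex.ofReal_ne_zero.2 hp.ne'
  conv_rhs => rw [← Complex.norm_mul_exp_arg_mul_I w, hw, Complex.ofReal_one, one_mul]
  refine Complex.exp_eq_exp_iff_exists_int.2 ⟨k, ?_⟩
  rw [hk]
  push_cast [t₀]
  field_simp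
  ring

lemma isCompact_torus (m : ℕ) : IsCompact (torus m) := by
  have : torus m = univ.pi fun _ => sphere (0 : ℂ) 1 := by
    ext z
    simp [torus, Set.mem_pi]
  rw [this]
  exact isCompact_univ_pi fun _ => isCompact_sphere _ _

lemma torus_nonempty (m : ℕ) : (torus m).Nonempty :=
  ⟨fun _ => 1, fun _ => norm_one⟩

noncomputable def delayOrbit {m : ℕ} (t : Fin m → ℝ) (ω : ℝ) : Fin m → ℂ :=
  fun i => Complex.exp (-(Complex.I * ω * t i))

noncomputable def orbitSup {m : ℕ} (F : (Fin m → ℂ) → ℝ) (t : Fin m → ℝ) : ℝ :=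
  ⨆ ω : ℝ, F (delayOrbit t ω)

lemma delayOrbit_mem_torus {m : ℕ} (t : Fin m → ℝ) (ω : ℝ) :
    delayOrbit t ω ∈ torus m := by
  intro i
  rw [delayOrbit, Complex.norm_exp]
  simp

lemma exists_delayOrbit_eq {m : ℕ} {z : Fin m → ℂ} (hz : z ∈ torus m) (τ : Fin m → ℝ)
    {ε : ℝ} (hε : 0 < ε) : ∃ t : Fin m → ℝ, (∀ i, t i ∈ Ico (τ i) (τ i + ε)) ∧
      ∃ ω, delayOrbit t ω = z := by
  choose t ht hexp using fun i => exists_mem_Ico_exp_eq (hz i) (τ i) hε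
  exact ⟨t, ht, _, funext hexp⟩

section orbitSup

variable {m : ℕ} {F : (Fin m → ℂ) → ℝ}

lemma bddAbove_image_torus (hF : Continuous F) : BddAbove (F '' torus m) :=
  ((isCompact_torus m).image hF).bddAbove

lemma orbitSup_le (hF : Continuous F) (t : Fin m → ℝ) :
    orbitSup F t ≤ sSup (F '' torus m) :=
  ciSup_le fun ω =>
    le_csSup (bddAbove_image_torus hF) (mem_image_of_mem F (delayOrbit_mem_torus t ω))

lemma bddAbove_image_orbitSup (hF : Continuous F) (s : Set (Fin m → ℝ)) :
    BddAbove (orbitSup F '' s) :=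
  ⟨_, forall_mem_image.2 fun t _ => orbitSup_le hF t⟩

lemma le_orbitSup (hF : Continuous F) (t : Fin m → ℝ) (ω : ℝ) :
    F (delayOrbit t ω) ≤ orbitSup F t :=
  le_ciSup ⟨_, forall_mem_range.2 fun ω' =>
    le_csSup (bddAbove_image_torus hF) (mem_image_of_mem F (delayOrbit_mem_torus t ω'))⟩ ω

lemma ballSup_orbitSup (hF : Continuous F) {τ : Fin m → ℝ} (hτ : τ ∈ posDelays m)
    {ε : ℝ} (hε : 0 < ε) : ballSup (orbitSup F) (posDelays m) τ ε = sSup (F '' torus m) := by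
  refine le_antisymm (csSup_le ⟨_, mem_image_of_mem _ ⟨mem_ball_self hε, hτ⟩⟩ ?_)
    (csSup_le ((torus_nonempty m).image F) ?_)
  · exact forall_mem_image.2 fun t _ => orbitSup_le hF t
  · rintro _ ⟨z, hz, rfl⟩
    obtain ⟨t, ht, ω, rfl⟩ := exists_delayOrbit_eq hz τ hε
    have ht_ball : t ∈ ball τ ε := (dist_pi_lt_iff hε).2 fun i => by
      rw [Real.dist_eq, abs_lt]
      constructor <;> linarith [(ht i).1, (ht i).2]
    have ht_pos : t ∈ posDelays m := fun i => (hτ i).trans_le (ht i).1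
    exact (le_orbitSup hF t ω).trans
      (le_csSup (bddAbove_image_orbitSup hF _) ⟨t, ⟨ht_ball, ht_pos⟩, rfl⟩)

end orbitSup

theorem strongVal_max_formula_general {m : ℕ} (g : (Fin m → ℝ) → ℝ)
    (hg : ContinuousOn g (posDelays m))
    (F : (Fin m → ℂ) → ℝ) (hF : Continuous F)
    (f : (Fin m → ℝ) → ℝ)
    (hf : ∀ τ, f τ =
      max (g τ) (⨆ ω : ℝ, F (fun i => Complex.exp (-(Complex.I * ω * τ i))))) :
    ∀ τ ∈ posDelays m,
      strongVal f τ = max (strongVal g τ) (sSup (F '' torus m)) ∧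
      (strongVal g τ = g τ → strongVal f τ = max (g τ) (sSup (F '' torus m))) := by
  intro τ hτ
  have hf_eq : f = fun t => max (g t) (orbitSup F t) := funext hf
  have hg_lim : Tendsto (ballSup g (posDelays m) τ) (𝓝[>] 0) (𝓝 (g τ)) :=
    (hg τ hτ).tendsto_ballSup hτ
  have hf_ball : ballSup f (posDelays m) τ =ᶠ[𝓝[>] 0]
      fun ε => max (ballSup g (posDelays m) τ ε) (sSup (F '' torus m)) := by
    filter_upwards [(hg τ hτ).eventually_bddAbove_image_ball, self_mem_nhdsWithin]
      with ε hbdd hε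
    rw [← ballSup_orbitSup hF hτ hε, hf_eq]
    exact csSup_image_max hbdd (bddAbove_image_orbitSup hF _)
  have hf_lim : Tendsto (ballSup f (posDelays m) τ) (𝓝[>] 0)
      (𝓝 (max (g τ) (sSup (F '' torus m)))) :=
    (hg_lim.max tendsto_const_nhds).congr' hf_ball.symm
  have hsg : strongVal g τ = g τ := hg_lim.limUnder_eq
  have hsf : strongVal f τ = max (g τ) (sSup (F '' torus m)) := hf_lim.limUnder_eq
  exact ⟨hsf.trans (by rw [hsg]), fun _ => hsf⟩

/-- For `f(τ) = max(g(τ), sup_{ω} F(e^{-iωτ₁},…,e^{-iωτₘ}))` with `g` and `F`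
continuous, the strong value of `f` equals `max(sg(τ), max_{torus} F)`, and since
the strong value of the continuous `g` equals `g`, it also equals
`max(g(τ), max_{torus} F)`. -/
theorem strongVal_max_formula {m : ℕ} (g : (Fin m → ℝ) → ℝ)
    (hg : ContinuousOn g (posDelays m)) (c : ℝ)
    (F : (Fin m → ℂ) → ℝ) (hF : Continuous F)
    (f : (Fin m → ℝ) → ℝ)
    (hf : ∀ τ, f τ =
      max (g τ) (⨆ ω : ℝ, F (fun i => Complex.exp (-(Complex.I * ω * τ i))))) :
    ∀ τ ∈ posDelays m,
      strongVal f τ = max (strongVal g τ) (sSup (F '' torus m)) ∧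
      (strongVal g τ = g τ → strongVal f τ = max (g τ) (sSup (F '' torus m))) :=
  strongVal_max_formula_general g hg F hF f hf
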